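/- arXiv:2112.11306 — 2 statements merged into one kernel-verified Lean document; each statement's English description precedes it below -/
import Mathlib

section
/- The bilinear form on Sym²(H²) defined by ⟨α₁α₂, α₃α₄⟩ = (α₁,α₂)(α₃,α₄) + (α₁,α₃)(α₂,α₄) + (α₁,α₄)(α₂,α₃), where (·,·) is a non-degenerate symmetric bilinear form on a finite-dimensional rational vector space H², is itself non-degenerate. -/
/-!
Identify `V ⊗ V` with `End V` via `a ⊗ c ↦ b(a, ·) • c`. A swap-invariant tensor `x` becomes a
`b`-self-adjoint endomorphism `T`, and `B(x, v ⊗ w) = tr T · b(v, w) + 2 b(w, T v)`. If `x` is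
`B`-orthogonal to all symmetric tensors, non-degeneracy of `b` forces `T = -(tr T / 2) • id`;
taking traces gives `tr T · (1 + dim V / 2) = 0`, so `T = 0` and hence `x = 0`.
-/

open TensorProduct

section CommRing

variable {R V : Type*} [CommRing R] [AddCommGroup V] [Module R V] (b : V →ₗ[R] V →ₗ[R] R)

noncomputable def bilinTensorToEnd : V ⊗[R] V →ₗ[R] V →ₗ[R] V :=
  dualTensorHom R V V ∘ₗ LinearMap.rTensor V b

@[simp]
theorem bilinTensorToEnd_tmul (a c v : V) : bilinTensorToEnd b (a ⊗ₜ c) v = b a v • c := by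
  simp [bilinTensorToEnd]

theorem trace_comp_bilinTensorToEnd [Module.Free R V] [Module.Finite R V] :
    LinearMap.trace R V ∘ₗ bilinTensorToEnd b = lift b :=
  TensorProduct.ext' fun a c => by
    simp [bilinTensorToEnd, LinearMap.trace_eq_contract_apply]

theorem bilinTensorToEnd_injective [Module.Finite R V] [Module.Projective R V]
    (hb : b.SeparatingLeft) : Function.Injective (bilinTensorToEnd b) :=
  dualTensorHom_bijective.injective.comp <| Module.Flat.rTensor_preserves_injective_linearMap b <|
    LinearMap.ker_eq_bot.mp (LinearMap.separatingLeft_iff_ker_eq_bot.mp hb)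

variable {b}

theorem apply_bilinTensorToEnd_comm (hsymm : ∀ x y : V, b x y = b y x) (z : V ⊗[R] V) (v w : V) :
    b v (bilinTensorToEnd b (TensorProduct.comm R V V z) w) = b w (bilinTensorToEnd b z v) := by
  induction z using TensorProduct.induction_on with
  | zero => simp
  | tmul a c => simp [hsymm v a, hsymm c w, mul_comm]
  | add z₁ z₂ h₁ h₂ => simp [h₁, h₂]

theorem apply_tmul_eq_lift_mul_add {B : V ⊗[R] V →ₗ[R] V ⊗[R] V →ₗ[R] R}
    (hsymm : ∀ x y : V, b x y = b y x)
    (hB : ∀ v₁ v₂ v₃ v₄ : V, B (v₁ ⊗ₜ v₂) (v₃ ⊗ₜ v₄) =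
      b v₁ v₂ * b v₃ v₄ + b v₁ v₃ * b v₂ v₄ + b v₁ v₄ * b v₂ v₃) (z : V ⊗[R] V) (v w : V) :
    B z (v ⊗ₜ w) = lift b z * b v w + b w (bilinTensorToEnd b z v) +
      b v (bilinTensorToEnd b z w) := by
  induction z using TensorProduct.induction_on with
  | zero => simp
  | tmul a c => simp [hB, hsymm c, mul_comm]
  | add z₁ z₂ h₁ h₂ => simp only [map_add, LinearMap.add_apply, h₁, h₂]; ring

end CommRing

section Field

variable {K V : Type*} [Field K] [CharZero K] [AddCommGroup V] [Module K V]

theorem eq_zero_of_trace_smul_id_eq_neg_two_mul [FiniteDimensional K V] {c : K}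
    (h : LinearMap.trace K V (c • LinearMap.id) = -2 * c) : c = 0 := by
  rw [map_smul, LinearMap.trace_id, smul_eq_mul] at h
  have hc : c * ((Module.finrank K V + 2 : ℕ) : K) = 0 := by push_cast; linear_combination h
  exact (mul_eq_zero.mp hc).resolve_right (Nat.cast_ne_zero.mpr (by omega))

theorem bilinTensorToEnd_eq_smul_id {b : V →ₗ[K] V →ₗ[K] K} {B : V ⊗[K] V →ₗ[K] V ⊗[K] V →ₗ[K] K}
    (hsymm : ∀ x y : V, b x y = b y x) (hnd : b.SeparatingLeft)
    (hB : ∀ v₁ v₂ v₃ v₄ : V, B (v₁ ⊗ₜ v₂) (v₃ ⊗ₜ v₄) =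
      b v₁ v₂ * b v₃ v₄ + b v₁ v₃ * b v₂ v₄ + b v₁ v₄ * b v₂ v₃)
    {x : V ⊗[K] V} (hx : TensorProduct.comm K V V x = x)
    (hxB : ∀ y : V ⊗[K] V, TensorProduct.comm K V V y = y → B x y = 0) :
    bilinTensorToEnd b x = -(lift b x / 2) • LinearMap.id := by
  set T := bilinTensorToEnd b x
  have hT : ∀ v w, b v (T w) = b w (T v) := fun v w => by
    simpa [hx] using apply_bilinTensorToEnd_comm hsymm x v w
  have hB_tmul : ∀ v w, B x (v ⊗ₜ w) = lift b x * b v w + 2 * b w (T v) := fun v w => by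
    rw [apply_tmul_eq_lift_mul_add hsymm hB, hT]; ring
  ext v
  refine sub_eq_zero.mp (hnd _ fun w => ?_)
  have h := hxB (v ⊗ₜ w + w ⊗ₜ v) (by simp [add_comm])
  rw [map_add, hB_tmul, hB_tmul, hsymm w v] at h
  simp only [LinearMap.smul_apply, LinearMap.id_apply, map_sub, map_smul, LinearMap.sub_apply,
    smul_eq_mul, hsymm (T v) w]
  linear_combination h / 4 - hT v w / 2

end Field

/-- The bilinear form on Sym²(H²) (modelled as the swap-invariant part of H²⊗H²) defined by
⟨v₁v₂, v₃v₄⟩ = b(v₁,v₂)b(v₃,v₄) + b(v₁,v₃)b(v₂,v₄) + b(v₁,v₄)b(v₂,v₃), for b a non-degenerate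
symmetric bilinear form on a finite-dimensional rational vector space, is non-degenerate. -/
theorem stmt_0 (V : Type*) [AddCommGroup V] [Module ℚ V] [FiniteDimensional ℚ V]
    (b : V →ₗ[ℚ] V →ₗ[ℚ] ℚ) (hsymm : ∀ x y : V, b x y = b y x)
    (hnd : ∀ x : V, (∀ y : V, b x y = 0) → x = 0)
    (B : TensorProduct ℚ V V →ₗ[ℚ] TensorProduct ℚ V V →ₗ[ℚ] ℚ)
    (hB : ∀ v₁ v₂ v₃ v₄ : V, B (v₁ ⊗ₜ[ℚ] v₂) (v₃ ⊗ₜ[ℚ] v₄) =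
      b v₁ v₂ * b v₃ v₄ + b v₁ v₃ * b v₂ v₄ + b v₁ v₄ * b v₂ v₃) :
    ∀ x : TensorProduct ℚ V V, TensorProduct.comm ℚ V V x = x →
      (∀ y : TensorProduct ℚ V V, TensorProduct.comm ℚ V V y = y → B x y = 0) → x = 0 := by
  intro x hx hxB
  have hT := bilinTensorToEnd_eq_smul_id hsymm hnd hB hx hxB
  have hlift : lift b x = 0 := by
    have htrace := congr(LinearMap.trace ℚ V $hT)
    rw [← LinearMap.comp_apply, trace_comp_bilinTensorToEnd] at htrace
    linear_combination -2 * eq_zero_of_trace_smul_id_eq_neg_two_mul (by rw [← htrace]; ring)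
  apply bilinTensorToEnd_injective b hnd
  rw [hT, hlift, map_zero, zero_div, neg_zero, zero_smul]
end

section
/- The hyperbolic lattice U, i.e. ℤ² with bilinear form given by the Gram matrix [[0,1],[1,0]], is the unique (up to isometry) even unimodular lattice of rank 2 and signature (1,1). -/
/-!
The Gram determinant of a ℤ-lattice does not depend on the basis, so here it is `-1`. Writing the
Gram matrix as `[[2a, c], [c, 2d]]`, the binary form `a x² + c x y + d y²` has discriminant `1`,
a square, hence a primitive zero `(p, q)`. The primitive isotropic vector `p e₀ + q e₁` extends
to a basis `(f₀, f₁)`; then the determinant is `-b(f₀, f₁)²`, so `b(f₀, f₁) = ±1`, and since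
`b(f₁, f₁)` is even, a shear of `f₁` along `f₀` makes it isotropic as well.
-/

open Matrix

theorem Module.Basis.exists_fin_two_apply_eq {R M : Type*} [CommRing R] [AddCommGroup M]
    [Module R M] (e : Module.Basis (Fin 2) R M) {a b c d : R} (h : IsUnit (a * d - b * c)) :
    ∃ f : Module.Basis (Fin 2) R M, f 0 = a • e 0 + c • e 1 ∧ f 1 = b • e 0 + d • e 1 := by
  have hP : IsUnit (LinearMap.toMatrix e e (Matrix.toLin e e !![a, b; c, d])).det := by
    rwa [LinearMap.toMatrix_toLin, det_fin_two_of]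
  refine ⟨e.map (LinearEquiv.ofIsUnitDet hP), ?_, ?_⟩ <;>
    simp [Module.Basis.map_apply, LinearEquiv.ofIsUnitDet_apply, Matrix.toLin_self,
      Fin.sum_univ_two]

theorem Module.Basis.exists_apply_zero_eq_of_isCoprime {R M : Type*} [CommRing R]
    [AddCommGroup M] [Module R M] (e : Module.Basis (Fin 2) R M) {p q : R}
    (h : IsCoprime p q) : ∃ f : Module.Basis (Fin 2) R M, f 0 = p • e 0 + q • e 1 := by
  obtain ⟨u, v, huv⟩ := h
  obtain ⟨f, hf, -⟩ := e.exists_fin_two_apply_eq (a := p) (b := -v) (c := q) (d := u)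
    (by rw [show p * u - -v * q = 1 by linear_combination huv]; exact isUnit_one)
  exact ⟨f, hf⟩

theorem LinearMap.det_toMatrix₂_int_eq {ι M : Type*} [Fintype ι] [DecidableEq ι]
    [AddCommGroup M] (B : M →ₗ[ℤ] M →ₗ[ℤ] ℤ) (e f : Module.Basis ι ℤ M) :
    (LinearMap.toMatrix₂ f f B).det = (LinearMap.toMatrix₂ e e B).det := by
  rw [← LinearMap.toMatrix₂_mul_basis_toMatrix e e f f B, det_mul, det_mul, det_transpose,
    mul_right_comm, ← Module.Basis.det_apply, Int.isUnit_mul_self (e.isUnit_det f), one_mul]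

theorem Int.exists_isCoprime_of_eq_zero {a c d x y : ℤ} (hxy : x ≠ 0 ∨ y ≠ 0)
    (h : a * x ^ 2 + c * x * y + d * y ^ 2 = 0) :
    ∃ p q : ℤ, IsCoprime p q ∧ a * p ^ 2 + c * p * q + d * q ^ 2 = 0 := by
  have hg : 0 < Int.gcd x y := Int.gcd_pos_iff.mpr hxy
  obtain ⟨g, p, q, hg0, hpq, rfl, rfl⟩ := Int.exists_gcd_one' hg
  refine ⟨p, q, Int.isCoprime_iff_gcd_eq_one.mpr hpq, ?_⟩
  have hg2 : ((g : ℤ) ^ 2) ≠ 0 := by positivity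
  apply (mul_eq_zero.mp _).resolve_left hg2
  linear_combination h

theorem Int.exists_isCoprime_of_discrim_eq {a c d s : ℤ} (h : discrim a c d = s * s) :
    ∃ p q : ℤ, IsCoprime p q ∧ a * p ^ 2 + c * p * q + d * q ^ 2 = 0 := by
  rcases eq_or_ne a 0 with rfl | ha
  · exact ⟨1, 0, isCoprime_one_left, by ring⟩
  · -- `(s - c, 2a)` is a zero because `4a (a x² + c x y + d y²) = (2a x + c y)² - s² y²`.
    refine Int.exists_isCoprime_of_eq_zero (x := s - c) (y := 2 * a) (.inr (by omega)) ?_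
    rw [discrim] at h
    linear_combination (-a) * h

theorem LinearMap.exists_hyperbolic_basis_of_isotropic {R M : Type*} [CommRing R]
    [AddCommGroup M] [Module R M] (B : M →ₗ[R] M →ₗ[R] R) (hB : ∀ x y, B x y = B y x)
    (f : Module.Basis (Fin 2) R M) (h0 : B (f 0) (f 0) = 0) (h1 : 2 ∣ B (f 1) (f 1))
    (h01 : IsUnit (B (f 0) (f 1))) :
    ∃ g : Module.Basis (Fin 2) R M,
      B (g 0) (g 0) = 0 ∧ B (g 1) (g 1) = 0 ∧ B (g 0) (g 1) = 1 ∧ B (g 1) (g 0) = 1 := by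
  obtain ⟨u, hu⟩ := h01
  obtain ⟨d, hd⟩ := h1
  obtain ⟨g, hg0, hg1⟩ := f.exists_fin_two_apply_eq (a := 1) (b := -(d * ↑u⁻¹ * ↑u⁻¹))
    (c := 0) (d := ↑u⁻¹) (by simp)
  have hu' : (↑u⁻¹ : R) * u = 1 := u.inv_mul
  have h10 : B (f 1) (f 0) = u := by rw [hB, hu]
  have hg01 : B (g 0) (g 1) = 1 := by
    simp [hg0, hg1, h0, ← hu, hu']
  refine ⟨g, by simp [hg0, h0], ?_, hg01, by rw [hB, hg01]⟩
  simp only [hg1, map_add, map_smul, LinearMap.add_apply, LinearMap.smul_apply, smul_eq_mul,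
    h0, h10, ← hu, hd]
  linear_combination (-2 * d * ↑u⁻¹ * ↑u⁻¹) * hu'

/-- The hyperbolic lattice U is the unique (up to isometry) even unimodular lattice of rank 2
and signature (1,1): any rank-2 lattice (free ℤ-module with symmetric ℤ-valued bilinear form)
which is even, unimodular (Gram determinant a unit) and of signature (1,1) (for a 2×2 symmetric
matrix this means the Gram determinant is negative) admits a basis with Gram matrix
[[0,1],[1,0]]. -/
theorem stmt_3 (L : Type*) [AddCommGroup L]
    (b : L →ₗ[ℤ] L →ₗ[ℤ] ℤ) (hsymm : ∀ x y : L, b x y = b y x)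
    (e : Module.Basis (Fin 2) ℤ L)
    (heven : ∀ x : L, 2 ∣ b x x)
    (huni : IsUnit (Matrix.of fun i j => b (e i) (e j) : Matrix (Fin 2) (Fin 2) ℤ).det)
    (hsig : (Matrix.of fun i j => b (e i) (e j) : Matrix (Fin 2) (Fin 2) ℤ).det < 0) :
    ∃ f : Module.Basis (Fin 2) ℤ L,
      b (f 0) (f 0) = 0 ∧ b (f 1) (f 1) = 0 ∧ b (f 0) (f 1) = 1 ∧ b (f 1) (f 0) = 1 := by
  have hdet : (LinearMap.toMatrix₂ e e b).det = -1 := by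
    have hgram : (Matrix.of fun i j => b (e i) (e j)) = LinearMap.toMatrix₂ e e b := by
      ext; simp
    rw [← hgram]
    rcases Int.isUnit_iff.mp huni with h | h <;> omega
  obtain ⟨a, ha⟩ := heven (e 0)
  obtain ⟨d, hd⟩ := heven (e 1)
  have hdisc : discrim a (b (e 0) (e 1)) d = 1 * 1 := by
    rw [det_fin_two] at hdet
    simp only [LinearMap.toMatrix₂_apply, ha, hd, hsymm (e 1)] at hdet
    rw [discrim]
    linear_combination -hdet
  obtain ⟨p, q, hpq, hQ⟩ := Int.exists_isCoprime_of_discrim_eq hdisc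
  obtain ⟨f, hf⟩ := e.exists_apply_zero_eq_of_isCoprime hpq
  have hf0 : b (f 0) (f 0) = 0 := by
    simp only [hf, map_add, map_smul, LinearMap.add_apply, LinearMap.smul_apply, smul_eq_mul, ha,
      hd, hsymm (e 1)]
    linear_combination 2 * hQ
  have hf01 : IsUnit (b (f 0) (f 1)) := by
    have hdetf := LinearMap.det_toMatrix₂_int_eq b e f
    simp only [hdet, det_fin_two, LinearMap.toMatrix₂_apply, hf0, hsymm (f 1)] at hdetf
    exact IsUnit.of_mul_eq_one _ (by linear_combination -hdetf)
  exact b.exists_hyperbolic_basis_of_isotropic hsymm f hf0 (heven _) hf01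
end
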